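/- For every α ∈ (0,3) there exists a constant C > 0, depending only on α, such that for every λ ∈ (0,1], every measurable f : ℝ×𝕋 → ℝ with |f(x)| ≤ λ^{−3}·1_{|x| ≤ λ} for all x, and every y ∈ ℝ×𝕋, one has ∫_{ℝ×𝕋} |f(x)| |x−y|^{−α} dx ≤ C (|y| + λ)^{−α}. -/

import Mathlib

open MeasureTheory Real
open scoped ENNReal

/-- The parabolic norm `|x| = √|x₀| + d(x₁,0)` of a space-time point of `ℝ × 𝕋`,
where `𝕋 = ℝ/ℤ` is the unit torus. The parabolic distance between `x` and `y`
is `pnorm (x - y)`. -/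
noncomputable def pnorm (x : ℝ × AddCircle (1 : ℝ)) : ℝ :=
  Real.sqrt |x.1| + ‖x.2‖

section Aux

open Set

lemma pnorm_nonneg' (x : ℝ × AddCircle (1:ℝ)) : 0 ≤ pnorm x :=
  add_nonneg (Real.sqrt_nonneg _) (norm_nonneg _)

lemma pnorm_neg' (x : ℝ × AddCircle (1:ℝ)) : pnorm (-x) = pnorm x := by
  simp [pnorm, abs_neg]

lemma sqrt_abs_add (a b : ℝ) : Real.sqrt |a + b| ≤ Real.sqrt |a| + Real.sqrt |b| := by
  have h1 : Real.sqrt |a + b| ≤ Real.sqrt (|a| + |b|) := Real.sqrt_le_sqrt (abs_add_le a b)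
  have h2 : Real.sqrt (|a| + |b|) ≤ Real.sqrt |a| + Real.sqrt |b| := by
    have hsq : |a| + |b| ≤ (Real.sqrt |a| + Real.sqrt |b|) ^ 2 := by
      nlinarith [Real.sq_sqrt (abs_nonneg a), Real.sq_sqrt (abs_nonneg b),
        Real.sqrt_nonneg |a|, Real.sqrt_nonneg |b|]
    calc Real.sqrt (|a| + |b|) ≤ Real.sqrt ((Real.sqrt |a| + Real.sqrt |b|) ^ 2) :=
          Real.sqrt_le_sqrt hsq
      _ = Real.sqrt |a| + Real.sqrt |b| :=
          Real.sqrt_sq (add_nonneg (Real.sqrt_nonneg _) (Real.sqrt_nonneg _))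
  linarith

lemma pnorm_add_le' (x y : ℝ × AddCircle (1:ℝ)) : pnorm (x + y) ≤ pnorm x + pnorm y := by
  simp only [pnorm, Prod.fst_add, Prod.snd_add]
  have h1 := sqrt_abs_add x.1 y.1
  have h2 := norm_add_le x.2 y.2
  linarith

lemma oneD (c R : ℝ) (hc0 : 0 ≤ c) (hc1 : c < 1) (hR : 0 < R) :
    ∫⁻ t : ℝ, ENNReal.ofReal ((if |t| ≤ R then 1 else 0) * |t| ^ (-c))
      ≤ ENNReal.ofReal (2 * (R ^ (1 - c) / (1 - c))) := by
  set F : ℝ → ℝ≥0∞ := fun t => ENNReal.ofReal ((if |t| ≤ R then 1 else 0) * |t| ^ (-c)) with hF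
  have hFmeas : Measurable F := by
    apply ENNReal.measurable_ofReal.comp
    exact ((measurable_const.ite (measurableSet_le (continuous_abs.measurable) measurable_const)
      measurable_const).mul ((continuous_abs.measurable).pow_const _))
  have hIoi : ∫⁻ t in Ioi (0:ℝ), F t ≤ ENNReal.ofReal (R ^ (1 - c) / (1 - c)) := by
    have hmono : ∫⁻ t in Ioi (0:ℝ), F t ≤
        ∫⁻ t in Ioi (0:ℝ), (Ioc (0:ℝ) R).indicator (fun t => ENNReal.ofReal (t ^ (-c))) t := by
      refine lintegral_mono_ae ((ae_restrict_iff' measurableSet_Ioi).2 (ae_of_all _ ?_))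
      intro t ht
      have ht0 : 0 < t := ht
      by_cases h : t ≤ R
      · have hmem : t ∈ Ioc (0:ℝ) R := ⟨ht0, h⟩
        rw [Set.indicator_of_mem hmem, hF]
        simp only [abs_of_pos ht0, h, if_pos, one_mul]
        exact le_refl _
      · rw [hF]
        simp only [abs_of_pos ht0, h, if_neg, not_false_iff, zero_mul]
        simp
    have hind : ∫⁻ t in Ioi (0:ℝ), (Ioc (0:ℝ) R).indicator
          (fun t => ENNReal.ofReal (t ^ (-c))) t
        ≤ ∫⁻ t in Ioc (0:ℝ) R, ENNReal.ofReal (t ^ (-c)) := by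
      calc ∫⁻ t in Ioi (0:ℝ), (Ioc (0:ℝ) R).indicator (fun t => ENNReal.ofReal (t ^ (-c))) t
          ≤ ∫⁻ t, (Ioc (0:ℝ) R).indicator (fun t => ENNReal.ofReal (t ^ (-c))) t :=
            setLIntegral_le_lintegral _ _
        _ = ∫⁻ t in Ioc (0:ℝ) R, ENNReal.ofReal (t ^ (-c)) := by
            rw [lintegral_indicator measurableSet_Ioc]
    have hInt : IntegrableOn (fun t : ℝ => t ^ (-c)) (Ioc 0 R) volume :=
      (intervalIntegral.intervalIntegrable_rpow' (by linarith : (-1:ℝ) < -c)).1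
    have hnn : 0 ≤ᵐ[volume.restrict (Ioc (0:ℝ) R)] fun t : ℝ => t ^ (-c) :=
      (ae_restrict_iff' measurableSet_Ioc).2 (ae_of_all _ fun t ht => rpow_nonneg ht.1.le _)
    have hval : ∫⁻ t in Ioc (0:ℝ) R, ENNReal.ofReal (t ^ (-c))
        = ENNReal.ofReal (∫ t in Ioc (0:ℝ) R, t ^ (-c)) :=
      (ofReal_integral_eq_lintegral_ofReal hInt hnn).symm
    have hcomp : ∫ t in Ioc (0:ℝ) R, t ^ (-c) = R ^ (1 - c) / (1 - c) := by
      rw [← intervalIntegral.integral_of_le hR.le]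
      rw [integral_rpow (Or.inl (by linarith))]
      rw [Real.zero_rpow (by linarith : (-c) + 1 ≠ 0)]
      ring_nf
    calc ∫⁻ t in Ioi (0:ℝ), F t ≤ _ := hmono
      _ ≤ _ := hind
      _ = ENNReal.ofReal (R ^ (1 - c) / (1 - c)) := by rw [hval, hcomp]
  have hIci : ∫⁻ t in Ici (0:ℝ), F t = ∫⁻ t in Ioi (0:ℝ), F t :=
    setLIntegral_congr (MeasureTheory.Ioi_ae_eq_Ici).symm
  have hIio : ∫⁻ t in Iio (0:ℝ), F t = ∫⁻ t in Ioi (0:ℝ), F t := by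
    have hmp := Measure.measurePreserving_neg (volume : Measure ℝ)
    have hindm : Measurable ((Iio (0:ℝ)).indicator F) :=
      hFmeas.indicator measurableSet_Iio
    have h1 : ∫⁻ t in Iio (0:ℝ), F t = ∫⁻ t, (Iio (0:ℝ)).indicator F t :=
      (lintegral_indicator measurableSet_Iio F).symm
    have h2 : ∫⁻ t, (Iio (0:ℝ)).indicator F (-t) = ∫⁻ t, (Iio (0:ℝ)).indicator F t :=
      hmp.lintegral_comp hindm
    have h3 : (fun t : ℝ => (Iio (0:ℝ)).indicator F (-t)) = (Ioi (0:ℝ)).indicator F := by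
      funext t
      by_cases h : 0 < t
      · have hm1 : -t ∈ Iio (0:ℝ) := by simpa using h
        have hm2 : t ∈ Ioi (0:ℝ) := h
        rw [Set.indicator_of_mem hm1 F, Set.indicator_of_mem hm2 F, hF]
        simp [abs_neg]
      · have hm1 : -t ∉ Iio (0:ℝ) := by simpa using h
        have hm2 : t ∉ Ioi (0:ℝ) := h
        rw [Set.indicator_of_notMem hm1 F, Set.indicator_of_notMem hm2 F]
    rw [h1, ← h2, h3, lintegral_indicator measurableSet_Ioi]
  have hsplit := lintegral_add_compl F (measurableSet_Ici : MeasurableSet (Ici (0:ℝ))) (μ := volume)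
  rw [compl_Ici] at hsplit
  rw [← hsplit, hIci, hIio]
  have hX : 0 ≤ R ^ (1 - c) / (1 - c) :=
    div_nonneg (rpow_nonneg hR.le _) (by linarith)
  calc (∫⁻ t in Ioi (0:ℝ), F t) + ∫⁻ t in Ioi (0:ℝ), F t
      ≤ ENNReal.ofReal (R ^ (1 - c) / (1 - c)) + ENNReal.ofReal (R ^ (1 - c) / (1 - c)) :=
        add_le_add hIoi hIoi
    _ = ENNReal.ofReal (2 * (R ^ (1 - c) / (1 - c))) := by
        rw [← ENNReal.ofReal_add hX hX]; ring_nf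

lemma torusD (c r : ℝ) (hc0 : 0 ≤ c) (hc1 : c < 1) (hr : 0 < r) :
    ∫⁻ s : AddCircle (1:ℝ), ENNReal.ofReal ((if ‖s‖ ≤ r then 1 else 0) * ‖s‖ ^ (-c))
      ≤ ENNReal.ofReal (2 * (r ^ (1 - c) / (1 - c))) := by
  have key := AddCircle.lintegral_preimage (1:ℝ) (-(1/2))
    (fun s : AddCircle (1:ℝ) => ENNReal.ofReal ((if ‖s‖ ≤ r then 1 else 0) * ‖s‖ ^ (-c)))
  rw [← key]
  have hcong : ∫⁻ x in Ioc (-(1/2):ℝ) (-(1/2) + 1),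
      ENNReal.ofReal ((if ‖(↑x : AddCircle (1:ℝ))‖ ≤ r then 1 else 0) * ‖(↑x : AddCircle (1:ℝ))‖ ^ (-c))
      = ∫⁻ x in Ioc (-(1/2):ℝ) (-(1/2) + 1),
      ENNReal.ofReal ((if |x| ≤ r then 1 else 0) * |x| ^ (-c)) := by
    refine setLIntegral_congr_fun measurableSet_Ioc ?_
    intro x hx
    have habs : |x| ≤ |(1:ℝ)| / 2 := by
      rw [abs_one]
      rw [abs_le]
      constructor <;> [linarith [hx.1]; linarith [hx.2]]
    have hnorm : ‖(↑x : AddCircle (1:ℝ))‖ = |x| :=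
      (AddCircle.norm_coe_eq_abs_iff (p := (1:ℝ)) one_ne_zero).2 habs
    simp only [hnorm]
  rw [hcong]
  calc ∫⁻ x in Ioc (-(1/2):ℝ) (-(1/2) + 1), ENNReal.ofReal ((if |x| ≤ r then 1 else 0) * |x| ^ (-c))
      ≤ ∫⁻ x : ℝ, ENNReal.ofReal ((if |x| ≤ r then 1 else 0) * |x| ^ (-c)) :=
        setLIntegral_le_lintegral _ _
    _ ≤ ENNReal.ofReal (2 * (r ^ (1 - c) / (1 - c))) := oneD c r hc0 hc1 hr

lemma ball_meas (r : ℝ) (hr : 0 ≤ r) :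
    volume {x : ℝ × AddCircle (1:ℝ) | pnorm x ≤ r} ≤ ENNReal.ofReal (4 * r ^ 3) := by
  simp only [pnorm]
  have hsub : {x : ℝ × AddCircle (1:ℝ) | Real.sqrt |x.1| + ‖x.2‖ ≤ r}
      ⊆ (Icc (-(r^2)) (r^2)) ×ˢ Metric.closedBall (0 : AddCircle (1:ℝ)) r := by
    intro x hx
    simp only [Set.mem_setOf_eq] at hx
    have h1 : Real.sqrt |x.1| ≤ r := by linarith [norm_nonneg x.2]
    have h2 : ‖x.2‖ ≤ r := by linarith [Real.sqrt_nonneg |x.1|]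
    have habs : |x.1| ≤ r ^ 2 := by
      have := Real.sq_sqrt (abs_nonneg x.1)
      nlinarith [Real.sqrt_nonneg |x.1|]
    exact ⟨by rw [Set.mem_Icc]; constructor <;> [linarith [neg_abs_le x.1]; linarith [le_abs_self x.1]],
      by rwa [mem_closedBall_zero_iff]⟩
  calc volume {x : ℝ × AddCircle (1:ℝ) | Real.sqrt |x.1| + ‖x.2‖ ≤ r}
      ≤ volume ((Icc (-(r^2)) (r^2)) ×ˢ Metric.closedBall (0 : AddCircle (1:ℝ)) r) :=
        measure_mono hsub
    _ = volume (Icc (-(r^2)) (r^2)) * volume (Metric.closedBall (0 : AddCircle (1:ℝ)) r) := by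
        rw [Measure.volume_eq_prod, Measure.prod_prod]
    _ = ENNReal.ofReal (2 * r ^ 2) * ENNReal.ofReal (1 ⊓ 2 * r) := by
        rw [Real.volume_Icc, AddCircle.volume_closedBall]
        congr 1
        ring_nf
    _ ≤ ENNReal.ofReal (2 * r ^ 2) * ENNReal.ofReal (2 * r) := by
        gcongr
        exact min_le_right _ _
    _ = ENNReal.ofReal (4 * r ^ 3) := by
        rw [← ENNReal.ofReal_mul (by positivity)]
        ring_nf

lemma keyint (α θ : ℝ) (hα0 : 0 < α) (hθ0 : 0 ≤ θ) (hθ1 : θ ≤ 1)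
    (ha1 : α * θ / 2 < 1) (hb1 : α * (1 - θ) < 1) (r : ℝ) (hr : 0 < r) :
    ∫⁻ z : ℝ × AddCircle (1:ℝ),
        ENNReal.ofReal ((if pnorm z ≤ r then 1 else 0) * (pnorm z) ^ (-α))
      ≤ ENNReal.ofReal ((2 * ((r ^ 2) ^ (1 - α * θ / 2) / (1 - α * θ / 2)))
          * (2 * (r ^ (1 - α * (1 - θ)) / (1 - α * (1 - θ))))) := by
  simp only [pnorm]
  set a : ℝ := α * θ / 2 with ha_def
  set b : ℝ := α * (1 - θ) with hb_def
  have ha0 : 0 ≤ a := by positivity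
  have hb0 : 0 ≤ b := by nlinarith
  set F : ℝ → ℝ≥0∞ := fun t => ENNReal.ofReal ((if |t| ≤ r ^ 2 then 1 else 0) * |t| ^ (-a))
    with hFdef
  set G : AddCircle (1:ℝ) → ℝ≥0∞ :=
    fun s => ENNReal.ofReal ((if ‖s‖ ≤ r then 1 else 0) * ‖s‖ ^ (-b)) with hGdef
  have hFmeas : Measurable F := by
    apply ENNReal.measurable_ofReal.comp
    exact ((measurable_const.ite (measurableSet_le (continuous_abs.measurable) measurable_const)
      measurable_const).mul ((continuous_abs.measurable).pow_const _))
  have hGmeas : Measurable G := by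
    apply ENNReal.measurable_ofReal.comp
    exact ((measurable_const.ite (measurableSet_le (continuous_norm.measurable) measurable_const)
      measurable_const).mul ((continuous_norm.measurable).pow_const _))
  -- the null set where a coordinate vanishes
  have hnull : volume ({z : ℝ × AddCircle (1:ℝ) | z.1 = 0} ∪ {z | z.2 = 0}) = 0 := by
    apply measure_union_null
    · have : {z : ℝ × AddCircle (1:ℝ) | z.1 = 0} = ({0} : Set ℝ) ×ˢ (univ : Set (AddCircle (1:ℝ))) := by
        ext z
        simp only [Set.mem_setOf_eq, Set.mem_prod, Set.mem_singleton_iff, Set.mem_univ, and_true]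
      rw [this, Measure.volume_eq_prod, Measure.prod_prod, Real.volume_singleton, zero_mul]
    · have : {z : ℝ × AddCircle (1:ℝ) | z.2 = 0} = (univ : Set ℝ) ×ˢ ({0} : Set (AddCircle (1:ℝ))) := by
        ext z
        simp only [Set.mem_setOf_eq, Set.mem_prod, Set.mem_singleton_iff, Set.mem_univ, true_and]
      rw [this, Measure.volume_eq_prod, Measure.prod_prod]
      have h0 : volume ({0} : Set (AddCircle (1:ℝ))) = 0 := by
        rw [← Metric.closedBall_zero, AddCircle.volume_closedBall]
        norm_num
      rw [h0, mul_zero]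
  -- pointwise bound off the null set
  have hptwise : ∀ z : ℝ × AddCircle (1:ℝ), z.1 ≠ 0 → z.2 ≠ 0 →
      ENNReal.ofReal ((if Real.sqrt |z.1| + ‖z.2‖ ≤ r then 1 else 0)
        * (Real.sqrt |z.1| + ‖z.2‖) ^ (-α)) ≤ F z.1 * G z.2 := by
    intro z hz1 hz2
    by_cases h : Real.sqrt |z.1| + ‖z.2‖ ≤ r
    · set A : ℝ := Real.sqrt |z.1| with hA_def
      set B : ℝ := ‖z.2‖ with hB_def
      have hA : 0 < A := Real.sqrt_pos.2 (abs_pos.2 hz1)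
      have hB : 0 < B := norm_pos_iff.2 hz2
      have hAr : A ≤ r := by linarith
      have hBr : B ≤ r := by linarith
      have habs : |z.1| ≤ r ^ 2 := by
        have hAA : A ^ 2 = |z.1| := Real.sq_sqrt (abs_nonneg z.1)
        nlinarith
      have hgm : A ^ θ * B ^ (1 - θ) ≤ θ * A + (1 - θ) * B :=
        Real.geom_mean_le_arith_mean2_weighted hθ0 (by linarith) hA.le hB.le (by ring)
      have hsum : θ * A + (1 - θ) * B ≤ A + B := by nlinarith
      have hpos : 0 < A ^ θ * B ^ (1 - θ) :=
        mul_pos (Real.rpow_pos_of_pos hA θ) (Real.rpow_pos_of_pos hB (1 - θ))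
      have h1 : (A + B) ^ (-α) ≤ (A ^ θ * B ^ (1 - θ)) ^ (-α) :=
        Real.rpow_le_rpow_of_nonpos hpos (hgm.trans hsum) (by linarith)
      have h2 : (A ^ θ * B ^ (1 - θ)) ^ (-α) = |z.1| ^ (-a) * B ^ (-b) := by
        rw [Real.mul_rpow (Real.rpow_nonneg hA.le _) (Real.rpow_nonneg hB.le _)]
        congr 1
        · rw [hA_def, Real.sqrt_eq_rpow, ← Real.rpow_mul (abs_nonneg z.1),
            ← Real.rpow_mul (abs_nonneg z.1)]
          congr 1
          rw [ha_def]; ring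
        · rw [← Real.rpow_mul hB.le]
          congr 1
          rw [hb_def]; ring
      have hFz : F z.1 = ENNReal.ofReal (|z.1| ^ (-a)) := by
        rw [hFdef]
        simp only [habs, if_pos, one_mul]
      have hGz : G z.2 = ENNReal.ofReal (B ^ (-b)) := by
        rw [hGdef]
        simp only [← hB_def, hBr, if_pos, one_mul]
      rw [if_pos h, one_mul, hFz, hGz,
        ← ENNReal.ofReal_mul (Real.rpow_nonneg (abs_nonneg z.1) _)]
      exact ENNReal.ofReal_le_ofReal (h1.trans_eq h2)
    · rw [if_neg h, zero_mul]
      simp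
  -- a.e. bound
  have hae : ∀ᵐ z : ℝ × AddCircle (1:ℝ) ∂volume,
      ENNReal.ofReal ((if Real.sqrt |z.1| + ‖z.2‖ ≤ r then 1 else 0)
        * (Real.sqrt |z.1| + ‖z.2‖) ^ (-α)) ≤ F z.1 * G z.2 := by
    rw [ae_iff]
    apply measure_mono_null _ hnull
    intro z hz
    simp only [Set.mem_setOf_eq, not_le] at hz
    by_contra hmem
    simp only [Set.mem_union, Set.mem_setOf_eq, not_or] at hmem
    exact absurd (hptwise z hmem.1 hmem.2) (not_le.2 hz)
  calc ∫⁻ z : ℝ × AddCircle (1:ℝ),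
        ENNReal.ofReal ((if Real.sqrt |z.1| + ‖z.2‖ ≤ r then 1 else 0)
          * (Real.sqrt |z.1| + ‖z.2‖) ^ (-α))
      ≤ ∫⁻ z : ℝ × AddCircle (1:ℝ), F z.1 * G z.2 := lintegral_mono_ae hae
    _ = (∫⁻ t : ℝ, F t) * ∫⁻ s : AddCircle (1:ℝ), G s := by
        rw [Measure.volume_eq_prod ℝ (AddCircle (1:ℝ))]
        exact lintegral_prod_mul hFmeas.aemeasurable hGmeas.aemeasurable
    _ ≤ ENNReal.ofReal (2 * ((r ^ 2) ^ (1 - a) / (1 - a)))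
          * ENNReal.ofReal (2 * (r ^ (1 - b) / (1 - b))) := by
        have h1 := oneD a (r ^ 2) ha0 ha1 (by positivity)
        have h2 := torusD b r hb0 hb1 hr
        exact mul_le_mul' h1 h2
    _ = ENNReal.ofReal ((2 * ((r ^ 2) ^ (1 - a) / (1 - a))) * (2 * (r ^ (1 - b) / (1 - b)))) := by
        have hX : 0 ≤ 2 * ((r ^ 2) ^ (1 - a) / (1 - a)) :=
          mul_nonneg (by norm_num)
            (div_nonneg (Real.rpow_nonneg (by positivity) _) (by linarith))
        rw [← ENNReal.ofReal_mul hX]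

end Aux

/-- stated and used in Section 4.5 of the paper. For every
`α ∈ (0,3)` there is `C > 0`, depending only on `α`, such that for every `λ ∈ (0,1]`,
every `f : ℝ×𝕋 → ℝ` with `|f(x)| ≤ λ^{−3} 1_{|x|≤λ}` and every `y ∈ ℝ×𝕋`,
`∫_{ℝ×𝕋} |f(x)| |x−y|^{−α} dx ≤ C (|y|+λ)^{−α}`. -/
theorem stmt17 (α : ℝ) (hα : α ∈ Set.Ioo (0:ℝ) 3) :
    ∃ C : ℝ, 0 < C ∧ ∀ lam : ℝ, lam ∈ Set.Ioc (0:ℝ) 1 →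
      ∀ f : ℝ × AddCircle (1 : ℝ) → ℝ,
        (∀ x, |f x| ≤ if pnorm x ≤ lam then lam ^ (-(3:ℝ)) else 0) →
      ∀ y : ℝ × AddCircle (1 : ℝ),
        (∫⁻ x : ℝ × AddCircle (1 : ℝ),
            ENNReal.ofReal (|f x| * pnorm (x - y) ^ (-α)))
          ≤ ENNReal.ofReal (C * (pnorm y + lam) ^ (-α)) := by
  obtain ⟨hα0, hα3⟩ := hα
  -- choose the interpolation weight θ
  obtain ⟨θ, hθ0, hθ1, ha1, hb1⟩ :
      ∃ θ : ℝ, 0 ≤ θ ∧ θ ≤ 1 ∧ α * θ / 2 < 1 ∧ α * (1 - θ) < 1 := by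
    rcases le_or_gt α 1 with h | h
    · exact ⟨1, by norm_num, by norm_num, by nlinarith, by nlinarith⟩
    · refine ⟨(α + 1) / (2 * α), by positivity, ?_, ?_, ?_⟩
      · rw [div_le_one (by linarith)]; linarith
      · have he : α * ((α + 1) / (2 * α)) / 2 = (α + 1) / 4 := by
          field_simp; ring
        rw [he]; linarith
      · have he : α * (1 - (α + 1) / (2 * α)) = (α - 1) / 2 := by
          field_simp; ring
        rw [he]; linarith
  have ha0 : 0 ≤ α * θ / 2 := by positivity
  have hb0 : 0 ≤ α * (1 - θ) := by nlinarith
  set K : ℝ := (2 / (1 - α * θ / 2)) * (2 / (1 - α * (1 - θ))) with hK_def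
  have hK : 0 < K := by
    apply mul_pos <;> [exact div_pos (by norm_num) (by linarith); exact div_pos (by norm_num) (by linarith)]
  have h3α : (0:ℝ) < (3:ℝ) ^ α := Real.rpow_pos_of_pos (by norm_num) α
  refine ⟨27 * K + 4 * (3:ℝ) ^ α, by positivity, ?_⟩
  set C : ℝ := 27 * K + 4 * (3:ℝ) ^ α with hC_def
  have hC : 0 < C := by positivity
  intro lam hlam f hf y
  obtain ⟨hlam0, hlam1⟩ := hlam
  -- the key convolution-type estimate
  have hkey : ∀ r : ℝ, 0 < r →
      (∫⁻ z : ℝ × AddCircle (1:ℝ),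
        ENNReal.ofReal ((if pnorm z ≤ r then 1 else 0) * (pnorm z) ^ (-α)))
      ≤ ENNReal.ofReal (K * r ^ ((3:ℝ) - α)) := by
    intro r hr
    refine (keyint α θ hα0 hθ0 hθ1 ha1 hb1 r hr).trans (le_of_eq ?_)
    congr 1
    have h2 : (r ^ 2 : ℝ) ^ (1 - α * θ / 2) = r ^ (2 * (1 - α * θ / 2)) := by
      rw [← Real.rpow_natCast r 2, ← Real.rpow_mul hr.le]
      norm_num
    have h3 : r ^ (2 * (1 - α * θ / 2)) * r ^ (1 - α * (1 - θ)) = r ^ ((3:ℝ) - α) := by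
      rw [← Real.rpow_add hr]
      congr 1
      ring
    rw [h2, hK_def, ← h3]
    ring
  rcases le_or_gt (pnorm y) (2 * lam) with hcase | hcase
  · -- near case : |y| ≤ 2λ
    set H : ℝ × AddCircle (1:ℝ) → ℝ≥0∞ :=
      fun z => ENNReal.ofReal ((if pnorm z ≤ 3 * lam then 1 else 0) * (pnorm z) ^ (-α)) with hHdef
    have hptA : ∀ x : ℝ × AddCircle (1:ℝ), |f x| * pnorm (x - y) ^ (-α)
        ≤ lam ^ (-(3:ℝ)) * ((if pnorm (x - y) ≤ 3 * lam then 1 else 0) * pnorm (x - y) ^ (-α)) := by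
      intro x
      by_cases hx : pnorm x ≤ lam
      · have h3 : pnorm (x - y) ≤ 3 * lam := by
          have h := pnorm_add_le' x (-y)
          rw [pnorm_neg'] at h
          have : x - y = x + -y := sub_eq_add_neg x y
          rw [this]
          linarith
        rw [if_pos h3, one_mul]
        apply mul_le_mul_of_nonneg_right _ (Real.rpow_nonneg (pnorm_nonneg' _) _)
        calc |f x| ≤ _ := hf x
          _ = lam ^ (-(3:ℝ)) := by rw [if_pos hx]
      · have hfx : |f x| = 0 := le_antisymm (by simpa [if_neg hx] using hf x) (abs_nonneg _)
        rw [hfx, zero_mul]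
        apply mul_nonneg (Real.rpow_nonneg hlam0.le _)
        apply mul_nonneg _ (Real.rpow_nonneg (pnorm_nonneg' _) _)
        split_ifs <;> norm_num
    have htrans : (∫⁻ x : ℝ × AddCircle (1:ℝ), H (x - y)) = ∫⁻ z : ℝ × AddCircle (1:ℝ), H z := by
      rw [Measure.volume_eq_prod ℝ (AddCircle (1:ℝ))]
      exact lintegral_sub_right_eq_self H y
    calc ∫⁻ x : ℝ × AddCircle (1:ℝ), ENNReal.ofReal (|f x| * pnorm (x - y) ^ (-α))
        ≤ ∫⁻ x : ℝ × AddCircle (1:ℝ), ENNReal.ofReal (lam ^ (-(3:ℝ))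
            * ((if pnorm (x - y) ≤ 3 * lam then 1 else 0) * pnorm (x - y) ^ (-α))) :=
          lintegral_mono fun x => ENNReal.ofReal_le_ofReal (hptA x)
      _ = ∫⁻ x : ℝ × AddCircle (1:ℝ), ENNReal.ofReal (lam ^ (-(3:ℝ))) * H (x - y) :=
          lintegral_congr fun x => ENNReal.ofReal_mul (Real.rpow_nonneg hlam0.le _)
      _ = ENNReal.ofReal (lam ^ (-(3:ℝ))) * ∫⁻ x : ℝ × AddCircle (1:ℝ), H (x - y) :=
          lintegral_const_mul' _ _ ENNReal.ofReal_ne_top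
      _ = ENNReal.ofReal (lam ^ (-(3:ℝ))) * ∫⁻ z : ℝ × AddCircle (1:ℝ), H z := by rw [htrans]
      _ ≤ ENNReal.ofReal (lam ^ (-(3:ℝ))) * ENNReal.ofReal (K * (3 * lam) ^ ((3:ℝ) - α)) :=
          mul_le_mul_right (hkey (3 * lam) (by positivity)) _
      _ = ENNReal.ofReal (lam ^ (-(3:ℝ)) * (K * (3 * lam) ^ ((3:ℝ) - α))) :=
          (ENNReal.ofReal_mul (Real.rpow_nonneg hlam0.le _)).symm
      _ ≤ ENNReal.ofReal (C * (pnorm y + lam) ^ (-α)) := by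
          apply ENNReal.ofReal_le_ofReal
          have e1 : (3 * lam : ℝ) ^ ((3:ℝ) - α) = 3 ^ ((3:ℝ) - α) * lam ^ ((3:ℝ) - α) :=
            Real.mul_rpow (by norm_num) hlam0.le
          have e2 : lam ^ (-(3:ℝ)) * lam ^ ((3:ℝ) - α) = lam ^ (-α) := by
            rw [← Real.rpow_add hlam0]
            congr 1
            ring
          have e3 : (3:ℝ) ^ ((3:ℝ) - α) = 27 * 3 ^ (-α) := by
            rw [show (3:ℝ) - α = 3 + (-α) by ring, Real.rpow_add (by norm_num : (0:ℝ) < 3)]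
            congr 1
            rw [show (3:ℝ) = ((3:ℕ):ℝ) by norm_num, Real.rpow_natCast]
            norm_num
          have e4 : (3 * lam : ℝ) ^ (-α) ≤ (pnorm y + lam) ^ (-α) := by
            apply Real.rpow_le_rpow_of_nonpos (by linarith [pnorm_nonneg' y]) (by linarith)
            linarith
          have e5 : (3 * lam : ℝ) ^ (-α) = 3 ^ (-α) * lam ^ (-α) :=
            Real.mul_rpow (by norm_num) hlam0.le
          calc lam ^ (-(3:ℝ)) * (K * (3 * lam) ^ ((3:ℝ) - α))
              = K * ((3:ℝ) ^ ((3:ℝ) - α)) * (lam ^ (-(3:ℝ)) * lam ^ ((3:ℝ) - α)) := by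
                rw [e1]; ring
            _ = 27 * K * (3 ^ (-α) * lam ^ (-α)) := by rw [e2, e3]; ring
            _ ≤ C * (3 ^ (-α) * lam ^ (-α)) := by
                apply mul_le_mul_of_nonneg_right _ (mul_nonneg
                  (Real.rpow_nonneg (by norm_num) _) (Real.rpow_nonneg hlam0.le _))
                rw [hC_def]
                nlinarith
            _ = C * (3 * lam) ^ (-α) := by rw [e5]
            _ ≤ C * (pnorm y + lam) ^ (-α) := mul_le_mul_of_nonneg_left e4 hC.le
  · -- far case : |y| > 2λ
    set c0 : ℝ := lam ^ (-(3:ℝ)) * ((3:ℝ) ^ α * (pnorm y + lam) ^ (-α)) with hc0_def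
    have hc0 : 0 ≤ c0 := mul_nonneg (Real.rpow_nonneg hlam0.le _)
      (mul_nonneg (Real.rpow_nonneg (by norm_num) _)
        (Real.rpow_nonneg (by linarith [pnorm_nonneg' y]) _))
    have hptB : ∀ x : ℝ × AddCircle (1:ℝ), |f x| * pnorm (x - y) ^ (-α)
        ≤ (if pnorm x ≤ lam then 1 else 0) * c0 := by
      intro x
      by_cases hx : pnorm x ≤ lam
      · rw [if_pos hx, one_mul]
        have hyb : pnorm y ≤ pnorm x + pnorm (x - y) := by
          have h := pnorm_add_le' x (y - x)
          have hx1 : x + (y - x) = y := by abel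
          rw [hx1] at h
          have h2 : pnorm (y - x) = pnorm (x - y) := by
            rw [show y - x = -(x - y) by abel, pnorm_neg']
          linarith [h2 ▸ h]
        have hlow : (pnorm y + lam) / 3 ≤ pnorm (x - y) := by linarith
        have hposq : (0:ℝ) < (pnorm y + lam) / 3 := by
          have := pnorm_nonneg' y
          linarith
        have h6 : pnorm (x - y) ^ (-α) ≤ ((pnorm y + lam) / 3) ^ (-α) :=
          Real.rpow_le_rpow_of_nonpos hposq hlow (by linarith)
        have h7 : ((pnorm y + lam) / 3) ^ (-α) = (3:ℝ) ^ α * (pnorm y + lam) ^ (-α) := by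
          rw [Real.div_rpow (by linarith [pnorm_nonneg' y]) (by norm_num : (0:ℝ) ≤ 3),
            Real.rpow_neg (by norm_num : (0:ℝ) ≤ 3)]
          field_simp
        rw [hc0_def]
        have hfx : |f x| ≤ lam ^ (-(3:ℝ)) := by
          calc |f x| ≤ _ := hf x
            _ = lam ^ (-(3:ℝ)) := by rw [if_pos hx]
        apply mul_le_mul hfx (h6.trans_eq h7)
          (Real.rpow_nonneg (pnorm_nonneg' _) _) (Real.rpow_nonneg hlam0.le _)
      · have hfx : |f x| = 0 := le_antisymm (by simpa [if_neg hx] using hf x) (abs_nonneg _)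
        rw [hfx, zero_mul, if_neg hx, zero_mul]
    have hSmeas : MeasurableSet {x : ℝ × AddCircle (1:ℝ) | pnorm x ≤ lam} := by
      have hcont : Continuous pnorm := by
        apply Continuous.add
        · exact Real.continuous_sqrt.comp (continuous_abs.comp continuous_fst)
        · exact continuous_norm.comp continuous_snd
      exact (isClosed_le hcont continuous_const).measurableSet
    calc ∫⁻ x : ℝ × AddCircle (1:ℝ), ENNReal.ofReal (|f x| * pnorm (x - y) ^ (-α))
        ≤ ∫⁻ x : ℝ × AddCircle (1:ℝ),
            ENNReal.ofReal ((if pnorm x ≤ lam then 1 else 0) * c0) :=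
          lintegral_mono fun x => ENNReal.ofReal_le_ofReal (hptB x)
      _ = ∫⁻ x : ℝ × AddCircle (1:ℝ),
            {x : ℝ × AddCircle (1:ℝ) | pnorm x ≤ lam}.indicator
              (fun _ => ENNReal.ofReal c0) x := by
          apply lintegral_congr
          intro x
          by_cases hx : pnorm x ≤ lam
          · rw [if_pos hx, one_mul,
              Set.indicator_of_mem (show x ∈ {x : ℝ × AddCircle (1:ℝ) | pnorm x ≤ lam} from hx)]
          · rw [if_neg hx, zero_mul,
              Set.indicator_of_notMem (show x ∉ {x : ℝ × AddCircle (1:ℝ) | pnorm x ≤ lam} from hx)]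
            simp
      _ = ENNReal.ofReal c0 * volume {x : ℝ × AddCircle (1:ℝ) | pnorm x ≤ lam} := by
          rw [lintegral_indicator hSmeas, setLIntegral_const]
      _ ≤ ENNReal.ofReal c0 * ENNReal.ofReal (4 * lam ^ 3) :=
          mul_le_mul_right (ball_meas lam hlam0.le) _
      _ = ENNReal.ofReal (c0 * (4 * lam ^ 3)) := (ENNReal.ofReal_mul hc0).symm
      _ ≤ ENNReal.ofReal (C * (pnorm y + lam) ^ (-α)) := by
          apply ENNReal.ofReal_le_ofReal
          have epow : lam ^ (-(3:ℝ)) * lam ^ (3:ℕ) = 1 := by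
            rw [← Real.rpow_natCast lam 3, ← Real.rpow_add hlam0]
            norm_num
          have hPy : (0:ℝ) ≤ (pnorm y + lam) ^ (-α) :=
            Real.rpow_nonneg (by linarith [pnorm_nonneg' y]) _
          calc c0 * (4 * lam ^ 3)
              = 4 * (3:ℝ) ^ α * (pnorm y + lam) ^ (-α) * (lam ^ (-(3:ℝ)) * lam ^ (3:ℕ)) := by
                rw [hc0_def]; ring
            _ = 4 * (3:ℝ) ^ α * (pnorm y + lam) ^ (-α) := by rw [epow, mul_one]
            _ ≤ C * (pnorm y + lam) ^ (-α) := by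
                apply mul_le_mul_of_nonneg_right _ hPy
                rw [hC_def]
                nlinarith
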